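/- arXiv:1906.06066 — 5 statements merged into one kernel-verified Lean document; each statement's English description precedes it below -/
import Mathlib

section
/- Concatenation construction: Let C be a set of vectors of length n over {0,...,q-1} such that any two distinct elements have Hamming distance at least d. For each c ∈ C form the length-2n vector c|(q-1-c) obtained by appending the complement of c to c. Then for any two distinct codewords u = c|(q-1-c) and v = c'|(q-1-c') of the resulting code, both N(u,v) ≥ d and N(v,u) ≥ d. -/
/-- `Ncount x y` is the number of positions where `x` exceeds `y`. -/
def Ncount {n q : ℕ} (x y : Fin n → Fin q) : ℕ :=
  (Finset.univ.filter fun i => y i < x i).card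

/-! Appending the complement turns Hamming distance into asymmetric distance exactly:
`N(c|c̄, c'|c̄') = N(c, c') + N(c̄, c̄') = N(c, c') + N(c', c) = d_H(c, c')`, since complementing
reverses the order on `Fin q`. -/

section Ncount

variable {m n q : ℕ}

theorem Ncount_eq_sum (x y : Fin n → Fin q) :
    Ncount x y = ∑ i, if y i < x i then 1 else 0 :=
  Finset.card_filter _ _

theorem Ncount_append (x x' : Fin m → Fin q) (y y' : Fin n → Fin q) :
    Ncount (Fin.append x y) (Fin.append x' y') = Ncount x x' + Ncount y y' := by
  simp only [Ncount_eq_sum, Fin.sum_univ_add, Fin.append_left, Fin.append_right]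

theorem Ncount_rev (x y : Fin n → Fin q) :
    Ncount (fun i => (x i).rev) (fun i => (y i).rev) = Ncount y x := by
  simp only [Ncount, Fin.rev_lt_rev]

theorem Ncount_add_Ncount_swap (x y : Fin n → Fin q) :
    Ncount x y + Ncount y x = hammingDist x y := by
  rw [Ncount_eq_sum, Ncount_eq_sum, ← Finset.sum_add_distrib, hammingDist, Finset.card_filter]
  refine Finset.sum_congr rfl fun i _ => ?_
  split_ifs <;> omega

theorem Ncount_append_rev (x y : Fin n → Fin q) :
    Ncount (Fin.append x fun i => (x i).rev) (Fin.append y fun i => (y i).rev) =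
      hammingDist x y := by
  rw [Ncount_append, Ncount_rev, Ncount_add_Ncount_swap]

end Ncount

theorem stmt2_general {q n d : ℕ} (C : Set (Fin n → Fin q))
    (hC : ∀ c ∈ C, ∀ c' ∈ C, c ≠ c' →
      d ≤ (Finset.univ.filter fun i => c i ≠ c' i).card)
    (c : Fin n → Fin q) (hc : c ∈ C) (c' : Fin n → Fin q) (hc' : c' ∈ C)
    (hne : c ≠ c') :
    d ≤ Ncount (Fin.append c fun i => (c i).rev) (Fin.append c' fun i => (c' i).rev) ∧
    d ≤ Ncount (Fin.append c' fun i => (c' i).rev) (Fin.append c fun i => (c i).rev) := by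
  have hd : d ≤ hammingDist c c' := hC c hc c' hc' hne
  rw [Ncount_append_rev, Ncount_append_rev, hammingDist_comm c']
  exact ⟨hd, hd⟩

/-- Concatenating each codeword with its complement turns Hamming distance `d`
into asymmetric distance `d` in both directions. -/
theorem stmt2 {q n d : ℕ} (hq : 1 ≤ q) (C : Set (Fin n → Fin q))
    (hC : ∀ c ∈ C, ∀ c' ∈ C, c ≠ c' →
      d ≤ (Finset.univ.filter fun i => c i ≠ c' i).card)
    (c : Fin n → Fin q) (hc : c ∈ C) (c' : Fin n → Fin q) (hc' : c' ∈ C)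
    (hne : c ≠ c') :
    d ≤ Ncount (Fin.append c fun i => (c i).rev) (Fin.append c' fun i => (c' i).rev) ∧
    d ≤ Ncount (Fin.append c' fun i => (c' i).rev) (Fin.append c fun i => (c i).rev) :=
  stmt2_general C hC c hc c' hc' hne
end

section
/- Construction from near one-factorizations: For k ≥ 2 define a (2k-1) × (2k-1) array A with rows and columns indexed by Z_{2k-1} and entries in {0,...,k-1} by A_{i,j} = 0 if i = j, and A_{i,j} = x (the unique x ∈ {1,...,k-1}) if i ∈ {x+j, -x+j} mod 2k-1. Then any two distinct rows u, v of A satisfy N(u,v) = N(v,u) = k-1. -/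
/-- `NcountN x y` is the number of positions where `x` exceeds `y` (ℕ-valued entries). -/
def NcountN {m : ℕ} (x y : Fin m → ℕ) : ℕ :=
  (Finset.univ.filter fun i => y i < x i).card

/-- Entry `A_{i,j} = min(i-j mod 2k-1, j-i mod 2k-1)` of the near-one-factorization array. -/
def arrA (k : ℕ) (i j : Fin (2 * k - 1)) : ℕ :=
  min ((i.val + (2 * k - 1) - j.val) % (2 * k - 1))
      ((j.val + (2 * k - 1) - i.val) % (2 * k - 1))

section aux

variable {k : ℕ}

lemma arrA_eq (hk : 2 ≤ k) (i j : Fin (2 * k - 1)) :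
    haveI : NeZero (2 * k - 1) := ⟨by omega⟩
    arrA k i j = min (i - j).val (j - i).val := by
  haveI : NeZero (2 * k - 1) := ⟨by omega⟩
  have hi := i.isLt
  have hj := j.isLt
  unfold arrA
  rw [Fin.sub_def, Fin.sub_def]
  simp only [Fin.val_mk]
  congr 2 <;> omega

lemma dist_eq_iff (hk : 2 ≤ k) [NeZero (2 * k - 1)] (a b : Fin (2 * k - 1)) :
    min a.val (-a).val = min b.val (-b).val ↔ (a = b ∨ a = -b) := by
  constructor
  · intro h
    rcases min_choice a.val (-a).val with h1 | h1 <;>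
    rcases min_choice b.val (-b).val with h2 | h2 <;>
    rw [h1, h2] at h
    · exact Or.inl (Fin.val_injective h)
    · exact Or.inr (Fin.val_injective h)
    · refine Or.inr ?_
      have : -a = b := Fin.val_injective h
      rw [← this, neg_neg]
    · refine Or.inl ?_
      have : -a = -b := Fin.val_injective h
      exact neg_injective this
  · rintro (rfl | rfl)
    · rfl
    · rw [neg_neg, min_comm]

lemma double_inj (hk : 2 ≤ k) [NeZero (2 * k - 1)] :
    Function.Injective (fun j : Fin (2 * k - 1) => j + j) := by
  intro a b h
  simp only at h
  have h' := congrArg Fin.val h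
  rw [Fin.add_def, Fin.add_def] at h'
  have hmod : (a.val + a.val) % (2 * k - 1) = (b.val + b.val) % (2 * k - 1) := h'
  have hco : Nat.Coprime 2 (2 * k - 1) := by
    rw [Nat.coprime_two_left]
    exact ⟨k - 1, by omega⟩
  have h2 : 2 * a.val ≡ 2 * b.val [MOD 2 * k - 1] := by
    have : a.val + a.val ≡ b.val + b.val [MOD 2 * k - 1] := hmod
    calc 2 * a.val = a.val + a.val := by ring
    _ ≡ b.val + b.val [MOD 2 * k - 1] := this
    _ = 2 * b.val := by ring
  have h3 : a.val ≡ b.val [MOD 2 * k - 1] := h2.cancel_left_of_coprime hco.symm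
  have ha := a.isLt
  have hb := b.isLt
  have := h3
  unfold Nat.ModEq at this
  rw [Nat.mod_eq_of_lt ha, Nat.mod_eq_of_lt hb] at this
  exact Fin.val_injective this

end aux

/-- Any two distinct rows `u, v` of the array `A` satisfy `N(u,v) = N(v,u) = k-1`. -/
theorem stmt9 {k : ℕ} (hk : 2 ≤ k) (i₁ i₂ : Fin (2 * k - 1)) (hne : i₁ ≠ i₂) :
    NcountN (arrA k i₁) (arrA k i₂) = k - 1 ∧
    NcountN (arrA k i₂) (arrA k i₁) = k - 1 := by
  haveI : NeZero (2 * k - 1) := ⟨by omega⟩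
  -- the midpoint j₀ with j₀ + j₀ = i₁ + i₂
  obtain ⟨j₀, hj₀⟩ : ∃ j₀ : Fin (2 * k - 1), j₀ + j₀ = i₁ + i₂ := by
    have hsurj : Function.Surjective (fun j : Fin (2 * k - 1) => j + j) :=
      Finite.surjective_of_injective (double_inj hk)
    exact hsurj (i₁ + i₂)
  -- the set where entries are equal is exactly {j₀}
  have hEqset : (Finset.univ.filter fun j => arrA k i₁ j = arrA k i₂ j) = {j₀} := by
    ext j
    simp only [Finset.mem_filter, Finset.mem_univ, true_and, Finset.mem_singleton]
    rw [arrA_eq hk, arrA_eq hk]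
    have e1 : j - i₁ = -(i₁ - j) := by abel
    have e2 : j - i₂ = -(i₂ - j) := by abel
    rw [e1, e2, dist_eq_iff hk]
    constructor
    · rintro (h | h)
      · exact absurd (sub_left_inj.mp h) hne
      · rw [neg_sub] at h
        have h2 : i₁ + i₂ = j + j := sub_eq_sub_iff_add_eq_add.mp h
        exact double_inj hk (h2.symm.trans hj₀.symm)
    · rintro rfl
      right
      have h2 : i₁ - j = j - i₂ := sub_eq_sub_iff_add_eq_add.mpr hj₀.symm
      rw [h2, neg_sub]
  -- the reflection swaps the two strict-inequality sets
  have key1 : ∀ j, arrA k i₁ (i₁ + i₂ - j) = arrA k i₂ j := by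
    intro j
    rw [arrA_eq hk, arrA_eq hk]
    have e1 : i₁ - (i₁ + i₂ - j) = j - i₂ := by
      rw [add_sub_assoc, sub_add_eq_sub_sub, sub_self, zero_sub, neg_sub]
    have e2 : i₁ + i₂ - j - i₁ = i₂ - j := by
      rw [sub_right_comm, add_sub_cancel_left]
    rw [e1, e2, min_comm]
  have key2 : ∀ j, arrA k i₂ (i₁ + i₂ - j) = arrA k i₁ j := by
    intro j
    rw [arrA_eq hk, arrA_eq hk]
    have e1 : i₂ - (i₁ + i₂ - j) = j - i₁ := by
      rw [add_comm i₁ i₂, add_sub_assoc, sub_add_eq_sub_sub, sub_self, zero_sub, neg_sub]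
    have e2 : i₁ + i₂ - j - i₂ = i₁ - j := by
      rw [sub_right_comm, add_sub_cancel_right]
    rw [e1, e2, min_comm]
  have hsym : NcountN (arrA k i₁) (arrA k i₂) = NcountN (arrA k i₂) (arrA k i₁) := by
    unfold NcountN
    refine Finset.card_bij' (fun j _ => i₁ + i₂ - j) (fun j _ => i₁ + i₂ - j) ?_ ?_ ?_ ?_
    · intro a ha
      simp only [Finset.mem_filter, Finset.mem_univ, true_and] at ha ⊢
      rw [key1, key2]; exact ha
    · intro a ha
      simp only [Finset.mem_filter, Finset.mem_univ, true_and] at ha ⊢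
      rw [key1, key2]; exact ha
    · intro a _; exact sub_sub_cancel _ _
    · intro a _; exact sub_sub_cancel _ _
  -- counting
  have hsplit : (Finset.univ.filter fun j => ¬ arrA k i₂ j < arrA k i₁ j) =
      (Finset.univ.filter fun j => arrA k i₁ j < arrA k i₂ j) ∪
      (Finset.univ.filter fun j => arrA k i₁ j = arrA k i₂ j) := by
    ext j
    simp only [Finset.mem_filter, Finset.mem_univ, true_and, Finset.mem_union]
    omega
  have hdisj : Disjoint (Finset.univ.filter fun j => arrA k i₁ j < arrA k i₂ j)
      (Finset.univ.filter fun j => arrA k i₁ j = arrA k i₂ j) := by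
    rw [Finset.disjoint_filter]
    intro j _ h
    omega
  have htot := Finset.card_filter_add_card_filter_not
    (s := Finset.univ) (p := fun j : Fin (2 * k - 1) => arrA k i₂ j < arrA k i₁ j)
  rw [hsplit, Finset.card_union_of_disjoint hdisj, hEqset] at htot
  simp only [Finset.card_singleton, Finset.card_univ, Fintype.card_fin] at htot
  -- htot : N(i₁,i₂) + (N(i₂,i₁)' + 1) = 2k-1, where the middle card is NcountN (arrA k i₂) (arrA k i₁)
  have h1 : NcountN (arrA k i₁) (arrA k i₂) =
      (Finset.univ.filter fun j => arrA k i₂ j < arrA k i₁ j).card := rfl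
  have h2 : NcountN (arrA k i₂) (arrA k i₁) =
      (Finset.univ.filter fun j => arrA k i₁ j < arrA k i₂ j).card := rfl
  rw [← h1] at htot
  rw [← h2] at htot
  omega
end

section
/- n_k(2k-1, k-1) = 2k-1 for all integers k ≥ 2: there exists a k-ary code of length 2k-1 and size 2k-1 in which every two distinct codewords x, y satisfy N(x,y) ≥ k-1 and N(y,x) ≥ k-1, and no shorter k-ary code of size 2k-1 has this property. -/
open Finset

section PairCount

variable {α β : Type*} [LinearOrder β] (s : Finset α) (f : α → β)

lemma card_filter_lt_comm :
    #{p ∈ s ×ˢ s | f p.2 < f p.1} = #{p ∈ s ×ˢ s | f p.1 < f p.2} :=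
  card_nbij' Prod.swap Prod.swap (by intro p; simp +contextual) (by intro p; simp +contextual)
    (fun _ _ => rfl) (fun _ _ => rfl)

lemma card_filter_eq_eq_sum_sq [Fintype β] :
    #{p ∈ s ×ˢ s | f p.1 = f p.2} = ∑ v, #{x ∈ s | f x = v} ^ 2 := by
  rw [card_eq_sum_card_fiberwise (f := fun p => f p.1) (t := univ) (fun _ _ => mem_univ _)]
  refine sum_congr rfl fun v _ => ?_
  rw [sq, ← card_product, filter_filter]
  congr 1
  ext ⟨x, y⟩
  simp only [mem_filter, mem_product]
  grind

lemma two_mul_card_filter_lt_add_sum_sq [Fintype β] :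
    2 * #{p ∈ s ×ˢ s | f p.2 < f p.1} + ∑ v, #{x ∈ s | f x = v} ^ 2 = #s ^ 2 := by
  have hsplit := card_filter_add_card_filter_not (s := s ×ˢ s) (fun p => f p.2 < f p.1)
  have hnot := card_filter_add_card_filter_not (s := {p ∈ s ×ˢ s | ¬f p.2 < f p.1})
    (fun p => f p.1 < f p.2)
  simp only [filter_filter] at hnot
  have hlt : {p ∈ s ×ˢ s | ¬f p.2 < f p.1 ∧ f p.1 < f p.2} =
      {p ∈ s ×ˢ s | f p.1 < f p.2} :=
    filter_congr fun p _ => ⟨And.right, fun h => ⟨h.not_gt, h⟩⟩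
  have heq : {p ∈ s ×ˢ s | ¬f p.2 < f p.1 ∧ ¬f p.1 < f p.2} =
      {p ∈ s ×ˢ s | f p.1 = f p.2} :=
    filter_congr fun p _ => by rw [not_lt, not_lt, le_antisymm_iff, and_comm]
  rw [hlt, heq] at hnot
  rw [card_product, ← sq] at hsplit
  rw [← card_filter_eq_eq_sum_sq, ← hsplit, ← hnot, card_filter_lt_comm s f]
  ring

lemma three_mul_card_le_sum_sq_add [Fintype β] :
    3 * #s ≤ ∑ v, #{x ∈ s | f x = v} ^ 2 + 2 * Fintype.card β := by
  have hm : ∀ m : ℕ, 3 * m ≤ m ^ 2 + 2 := fun m => by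
    rcases m with _ | _ | m <;> nlinarith
  calc 3 * #s = ∑ v : β, 3 * #{x ∈ s | f x = v} := by
        rw [← mul_sum, card_eq_sum_card_fiberwise (f := f) (t := univ) fun _ _ => mem_univ _]
    _ ≤ ∑ v, (#{x ∈ s | f x = v} ^ 2 + 2) := sum_le_sum fun v _ => hm _
    _ = _ := by simp [sum_add_distrib, mul_comm]

lemma two_mul_card_filter_lt_add_le [Fintype β] :
    2 * #{p ∈ s ×ˢ s | f p.2 < f p.1} + 3 * #s ≤ #s ^ 2 + 2 * Fintype.card β := by
  have := two_mul_card_filter_lt_add_sum_sq s f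
  have := three_mul_card_le_sum_sq_add s f
  omega

end PairCount

lemma sum_Ncount_eq_sum_card_filter_lt {n q : ℕ} (C : Finset (Fin n → Fin q)) :
    ∑ p ∈ C ×ˢ C, Ncount p.1 p.2 = ∑ i, #{p ∈ C ×ˢ C | p.2 i < p.1 i} :=
  sum_card_bipartiteAbove_eq_sum_card_bipartiteBelow
    fun (p : (Fin n → Fin q) × (Fin n → Fin q)) i => p.2 i < p.1 i

theorem plotkin_bound_Ncount {n q T : ℕ} (C : Finset (Fin n → Fin q))
    (hC : ∀ x ∈ C, ∀ y ∈ C, x ≠ y → T ≤ Ncount x y) :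
    2 * (T * (#C ^ 2 - #C)) + n * (3 * #C) ≤ n * (#C ^ 2 + 2 * q) := by
  have hlow : T * (#C ^ 2 - #C) ≤ ∑ p ∈ C ×ˢ C, Ncount p.1 p.2 :=
    calc T * (#C ^ 2 - #C) = #C.offDiag * T := by rw [offDiag_card, sq, mul_comm]
      _ ≤ ∑ p ∈ C.offDiag, Ncount p.1 p.2 := card_nsmul_le_sum _ _ _ fun p hp => by
          obtain ⟨hx, hy, hxy⟩ := mem_offDiag.mp hp
          exact hC _ hx _ hy hxy
      _ ≤ ∑ p ∈ C ×ˢ C, Ncount p.1 p.2 := sum_le_sum_of_subset fun p hp =>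
          mem_product.mpr ⟨(mem_offDiag.mp hp).1, (mem_offDiag.mp hp).2.1⟩
  have hup : ∑ i, (2 * #{p ∈ C ×ˢ C | p.2 i < p.1 i} + 3 * #C) ≤
      ∑ _i : Fin n, (#C ^ 2 + 2 * q) :=
    sum_le_sum fun i _ => by simpa using two_mul_card_filter_lt_add_le C (fun x => x i)
  rw [sum_add_distrib, ← mul_sum, ← sum_Ncount_eq_sum_card_filter_lt] at hup
  simp only [sum_const, card_univ, Fintype.card_fin, smul_eq_mul] at hup
  linarith

lemma Ncount_comp_equiv {n q : ℕ} (x y : Fin n → Fin q) (σ : Equiv.Perm (Fin n)) :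
    Ncount (x ∘ σ) (y ∘ σ) = Ncount x y :=
  card_equiv σ (by simp)

def tent (k : ℕ) (j : Fin (2 * k - 1)) : Fin k :=
  ⟨min j.val (2 * k - 2 - j.val), by have := j.is_lt; omega⟩

def tentWord (k : ℕ) (a : Fin (2 * k - 1)) : Fin (2 * k - 1) → Fin k :=
  fun i => tent k (i + a)

lemma val_tent_eq_sub_one_iff {k : ℕ} (j : Fin (2 * k - 1)) :
    (tent k j).val = k - 1 ↔ j.val = k - 1 := by
  have := j.is_lt
  simp only [tent]
  omega

lemma tentWord_injective {k : ℕ} (hk : 1 ≤ k) : Function.Injective (tentWord k) := by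
  have : NeZero (2 * k - 1) := ⟨by omega⟩
  intro a b hab
  let c : Fin (2 * k - 1) := ⟨k - 1, by omega⟩
  have hpeak : (tentWord k b (c - a)).val = k - 1 := by
    rw [← hab, tentWord, sub_add_cancel, val_tent_eq_sub_one_iff]
  have : c - a + b = c := Fin.ext ((val_tent_eq_sub_one_iff _).mp hpeak)
  rw [sub_add_eq_add_sub, sub_eq_iff_eq_add] at this
  exact (add_left_cancel this).symm

lemma le_card_tent_add_lt {k : ℕ} {d : Fin (2 * k - 1)} (hd : d.val ≠ 0) :
    k - 1 ≤ #{j | tent k (j + d) < tent k j} := by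
  have hdlt := d.is_lt
  set e := (d.val + 1) / 2
  have hsub : Ico (k - e) (2 * k - 1 - e) ⊆ image Fin.val {j | tent k (j + d) < tent k j} := by
    intro j hj
    rw [mem_Ico] at hj
    refine mem_image.mpr ⟨⟨j, by omega⟩, mem_filter.mpr ⟨mem_univ _, ?_⟩, rfl⟩
    rw [Fin.lt_def]
    simp only [tent, Fin.val_add, Nat.add_mod_eq_ite, Nat.mod_eq_of_lt hdlt,
      Nat.mod_eq_of_lt (show j < 2 * k - 1 by omega)]
    split_ifs <;> omega
  calc k - 1 = #(Ico (k - e) (2 * k - 1 - e)) := by rw [Nat.card_Ico]; omega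
    _ ≤ _ := card_le_card hsub
    _ ≤ _ := card_image_le

lemma Ncount_tentWord {k : ℕ} (hk : 1 ≤ k) {a b : Fin (2 * k - 1)} (hab : a ≠ b) :
    k - 1 ≤ Ncount (tentWord k a) (tentWord k b) := by
  have : NeZero (2 * k - 1) := ⟨by omega⟩
  have hshift : tentWord k b = (fun j => tent k (j + (b - a))) ∘ Equiv.addRight a := by
    ext i
    simp [tentWord]
  rw [hshift, show tentWord k a = tent k ∘ Equiv.addRight a from rfl, Ncount_comp_equiv]
  exact le_card_tent_add_lt (Fin.val_ne_zero_iff.mpr (sub_ne_zero.mpr hab.symm))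

lemma two_mul_sub_one_le_of_plotkin_bound {k n : ℕ} (hk : 2 ≤ k)
    (h : 2 * ((k - 1) * ((2 * k - 1) ^ 2 - (2 * k - 1))) + n * (3 * (2 * k - 1)) ≤
      n * ((2 * k - 1) ^ 2 + 2 * k)) :
    2 * k - 1 ≤ n := by
  obtain ⟨j, rfl⟩ : ∃ j, k = j + 2 := ⟨k - 2, by omega⟩
  have hM : 2 * (j + 2) - 1 = 2 * j + 3 := by omega
  have hsq : (2 * j + 3) ^ 2 - (2 * j + 3) = (2 * j + 3) * (2 * j + 2) :=
    Nat.sub_eq_of_eq_add (by ring)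
  rw [hM, hsq, show j + 2 - 1 = j + 1 by omega] at h
  have hcancel : (j + 1) ^ 2 * (2 * j + 3) ≤ (j + 1) ^ 2 * n := by nlinarith
  rw [hM]
  exact Nat.le_of_mul_le_mul_left hcancel (by positivity)

/-- `n_k(2k-1, k-1) = 2k-1`: there is a `k`-ary `(k-2)`-EC-AUED code of length `2k-1`
and size `2k-1`, and no shorter one exists. -/
theorem stmt11 {k : ℕ} (hk : 2 ≤ k) :
    (∃ C : Finset (Fin (2 * k - 1) → Fin k), C.card = 2 * k - 1 ∧
      ∀ x ∈ C, ∀ y ∈ C, x ≠ y → k - 1 ≤ Ncount x y ∧ k - 1 ≤ Ncount y x) ∧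
    (∀ n : ℕ, ∀ C : Finset (Fin n → Fin k), C.card = 2 * k - 1 →
      (∀ x ∈ C, ∀ y ∈ C, x ≠ y → k - 1 ≤ Ncount x y ∧ k - 1 ≤ Ncount y x) →
      2 * k - 1 ≤ n) := by
  constructor
  · refine ⟨univ.image (tentWord k), ?_, ?_⟩
    · rw [card_image_of_injective _ (tentWord_injective (by omega)), card_univ, Fintype.card_fin]
    · simp only [mem_image, mem_univ, true_and]
      rintro _ ⟨a, rfl⟩ _ ⟨b, rfl⟩ hne
      have hab : a ≠ b := fun h => hne (h ▸ rfl)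
      exact ⟨Ncount_tentWord (by omega) hab, Ncount_tentWord (by omega) hab.symm⟩
  · intro n C hcard hC
    have hplotkin := plotkin_bound_Ncount C fun x hx y hy hxy => (hC x hx y hy hxy).1
    rw [hcard] at hplotkin
    exact two_mul_sub_one_le_of_plotkin_bound hk hplotkin
end

section
/- For odd k ≥ 3, let B be the (2k-1)×(2k-1) array with B_{i,j} ≡ A_{i,j} + (k-1)/2 (mod k), where A_{i,j} = min(i-j mod 2k-1, j-i mod 2k-1), and let u be the all-(k-1)/2 vector of length 2k-1. Then the 2k rows of B together with u form a k-ary code in which any two distinct codewords x, y satisfy N(x,y) ≥ k-1 and N(y,x) ≥ k-1. -/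
/-- Entry `B_{i,j} = A_{i,j} + (k-1)/2 (mod k)`. -/
def arrB (k : ℕ) (i j : Fin (2 * k - 1)) : ℕ := (arrA k i j + (k - 1) / 2) % k

/-!
Write `t = (k - 1) / 2` and `|d| = min(d, -d)` for `d ∈ ℤ/(2k-1)`, so row `i` of `B` is
`j ↦ (|i - j| + t) mod k` with `|i - j| ≤ k - 1`. This entry equals `t` only at `j = i`, and is
below `t` exactly when `|i - j| > t`, at `(2k - 1) - (2t + 1) = k - 1` positions; hence
`N(u, B_i) = k - 1` and `N(B_i, u) = (2k - 1) - (k - 1) - 1 = k - 1`.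
Two rows `i ≠ i'` agree only where `i - j = j - i'`, i.e. at the unique `j` with `2j = i + i'`
(`2k - 1` is odd), and the reflection `j ↦ i + i' - j` exchanges them, so
`N(B_i, B_i') = N(B_i', B_i) = ((2k - 1) - 1) / 2`.
-/

open Finset

lemma card_filter_comp_equiv {α β : Type*} [Fintype α] [Fintype β] (σ : α ≃ β)
    (p : β → Prop) [DecidablePred p] : #{a | p (σ a)} = #{b | p b} :=
  card_equiv σ (by simp)

section NcountN

variable {m : ℕ}

lemma NcountN_add_NcountN_add_card_eq (x y : Fin m → ℕ) :
    NcountN x y + NcountN y x + #{j | x j = y j} = m := by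
  simp only [NcountN, card_filter, ← sum_add_distrib]
  calc _ = ∑ _ : Fin m, 1 := sum_congr rfl fun j _ => by split_ifs <;> omega
    _ = m := by simp

lemma NcountN_comp_equiv (σ : Fin m ≃ Fin m) (x y : Fin m → ℕ) :
    NcountN (x ∘ σ) (y ∘ σ) = NcountN x y :=
  card_filter_comp_equiv σ fun j => y j < x j

end NcountN

def circNorm {n : ℕ} (d : Fin n) : ℕ := min d.val (-d).val

section circNorm

variable {n : ℕ}

@[simp]
lemma circNorm_neg (d : Fin n) : circNorm (-d) = circNorm d := by
  simp [circNorm, min_comm]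

lemma circNorm_eq_min_sub (d : Fin n) : circNorm d = min d.val (n - d.val) := by
  have := NeZero.of_pos d.pos
  rw [circNorm, Fin.val_neg]
  split_ifs with hd <;> simp [hd]

lemma two_mul_circNorm_le (d : Fin n) : 2 * circNorm d ≤ n := by
  rw [circNorm_eq_min_sub]; omega

lemma circNorm_eq_zero [NeZero n] {d : Fin n} : circNorm d = 0 ↔ d = 0 := by
  rw [circNorm_eq_min_sub, Fin.ext_iff, Fin.val_zero]
  omega

lemma circNorm_eq_circNorm_iff {d e : Fin n} : circNorm d = circNorm e ↔ d = e ∨ d = -e := by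
  have := NeZero.of_pos d.pos
  rw [circNorm_eq_min_sub, circNorm_eq_min_sub, Fin.ext_iff, Fin.ext_iff, Fin.val_neg]
  split_ifs with he
  · simp [he]; omega
  · omega

lemma card_filter_lt_circNorm (t : ℕ) : #{d : Fin n | t < circNorm d} = n - (2 * t + 1) := by
  have hval : ({d : Fin n | t < circNorm d} : Finset (Fin n)).map Fin.valEmbedding =
      Ioo t (n - t) := by
    ext v
    simp only [mem_map, mem_filter, mem_univ, true_and, mem_Ioo, Fin.valEmbedding_apply,
      circNorm_eq_min_sub]
    constructor
    · rintro ⟨d, hd, rfl⟩; omega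
    · intro hv; exact ⟨⟨v, by omega⟩, by simp only; omega, rfl⟩
  rw [← card_map Fin.valEmbedding, hval, Nat.card_Ioo]
  omega

lemma card_filter_add_self_eq (hn : Odd n) (c : Fin n) : #{j : Fin n | j + j = c} = 1 := by
  open Fin.CommRing in
  have := NeZero.of_pos c.pos
  obtain ⟨m, rfl⟩ := hn
  have h2 : (2 : Fin (2 * m + 1)) * ((m : Fin (2 * m + 1)) + 1) = 1 := by
    have := Fin.natCast_self (n := 2 * m + 1)
    push_cast at this
    linear_combination this
  rw [card_eq_one]
  refine ⟨((m : Fin (2 * m + 1)) + 1) * c, ?_⟩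
  ext j
  simp only [mem_filter, mem_univ, true_and, mem_singleton]
  constructor
  · rintro rfl; linear_combination (-j) * h2
  · rintro rfl; linear_combination c * h2

end circNorm

section arrB

variable {k : ℕ}

lemma arrA_eq_circNorm (i j : Fin (2 * k - 1)) : arrA k i j = circNorm (i - j) := by
  have := NeZero.of_pos i.pos
  rw [arrA, circNorm, neg_sub, Fin.sub_def, Fin.sub_def]
  congr 1 <;> · congr 1; omega

lemma arrA_lt (i j : Fin (2 * k - 1)) : arrA k i j < k := by
  have := two_mul_circNorm_le (i - j)
  have := i.pos
  rw [arrA_eq_circNorm]; omega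

lemma arrB_eq_ite (i j : Fin (2 * k - 1)) : arrB k i j =
    if arrA k i j + (k - 1) / 2 < k then arrA k i j + (k - 1) / 2
    else arrA k i j + (k - 1) / 2 - k := by
  have := arrA_lt i j
  rw [arrB]
  split_ifs with h
  · exact Nat.mod_eq_of_lt h
  · rw [Nat.mod_eq_sub_mod (by omega), Nat.mod_eq_of_lt (by omega)]

lemma arrB_eq_half_iff {i j : Fin (2 * k - 1)} : arrB k i j = (k - 1) / 2 ↔ i = j := by
  have := NeZero.of_pos i.pos
  rw [← sub_eq_zero (a := i), ← circNorm_eq_zero, ← arrA_eq_circNorm, arrB_eq_ite]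
  have := arrA_lt i j
  split_ifs <;> omega

lemma arrB_lt_half_iff (hk : Odd k) {i j : Fin (2 * k - 1)} :
    arrB k i j < (k - 1) / 2 ↔ (k - 1) / 2 < arrA k i j := by
  obtain ⟨t, rfl⟩ := hk
  have := arrA_lt i j
  rw [arrB_eq_ite]
  split_ifs <;> omega

lemma arrB_eq_arrB_iff {i i' j : Fin (2 * k - 1)} :
    arrB k i j = arrB k i' j ↔ arrA k i j = arrA k i' j := by
  have := arrA_lt i j
  have := arrA_lt i' j
  rw [arrB_eq_ite, arrB_eq_ite]
  split_ifs <;> omega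

lemma arrB_add_sub (i i' j : Fin (2 * k - 1)) : arrB k i (i + i' - j) = arrB k i' j := by
  have := NeZero.of_pos i.pos
  rw [arrB, arrB, arrA_eq_circNorm, arrA_eq_circNorm,
    show i - (i + i' - j) = -(i' - j) by abel, circNorm_neg]

lemma card_filter_half_eq_arrB (i : Fin (2 * k - 1)) : #{j | (k - 1) / 2 = arrB k i j} = 1 := by
  simp only [eq_comm (a := (k - 1) / 2), arrB_eq_half_iff, filter_eq, mem_univ, if_true,
    card_singleton]

lemma NcountN_half_arrB (hk : Odd k) (i : Fin (2 * k - 1)) :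
    NcountN (fun _ => (k - 1) / 2) (arrB k i) = k - 1 := by
  have := NeZero.of_pos i.pos
  simp only [NcountN, arrB_lt_half_iff hk, arrA_eq_circNorm]
  refine (card_filter_comp_equiv (Equiv.subLeft i) fun d => (k - 1) / 2 < circNorm d).trans ?_
  rw [card_filter_lt_circNorm]
  obtain ⟨t, rfl⟩ := hk
  omega

lemma NcountN_arrB_half (hk : Odd k) (i : Fin (2 * k - 1)) :
    NcountN (arrB k i) (fun _ => (k - 1) / 2) = k - 1 := by
  have := NcountN_add_NcountN_add_card_eq (fun _ => (k - 1) / 2) (arrB k i)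
  rw [NcountN_half_arrB hk, card_filter_half_eq_arrB] at this
  omega

lemma card_filter_arrB_eq_arrB {i i' : Fin (2 * k - 1)} (h : i ≠ i') :
    #{j | arrB k i j = arrB k i' j} = 1 := by
  have := NeZero.of_pos i.pos
  have hsol : ∀ j, arrB k i j = arrB k i' j ↔ j + j = i + i' := fun j => by
    rw [arrB_eq_arrB_iff, arrA_eq_circNorm, arrA_eq_circNorm, circNorm_eq_circNorm_iff,
      sub_left_inj, or_iff_right h, neg_sub, sub_eq_sub_iff_add_eq_add, eq_comm]
  simp only [hsol]
  exact card_filter_add_self_eq ⟨k - 1, by omega⟩ _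

lemma NcountN_arrB_arrB {i i' : Fin (2 * k - 1)} (h : i ≠ i') :
    NcountN (arrB k i) (arrB k i') = k - 1 := by
  have := NeZero.of_pos i.pos
  have hsymm : NcountN (arrB k i') (arrB k i) = NcountN (arrB k i) (arrB k i') := by
    rw [← NcountN_comp_equiv (Equiv.subLeft (i + i'))]
    congr 1 <;> funext j
    · exact add_comm i i' ▸ arrB_add_sub i' i j
    · exact arrB_add_sub i i' j
  have := NcountN_add_NcountN_add_card_eq (arrB k i) (arrB k i')
  rw [hsymm, card_filter_arrB_eq_arrB h] at this
  omega

end arrB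

theorem stmt12_general {k : ℕ} (hodd : Odd k) :
    ∀ x ∈ insert (fun _ : Fin (2 * k - 1) => (k - 1) / 2)
        {c : Fin (2 * k - 1) → ℕ | ∃ i, c = arrB k i},
      ∀ y ∈ insert (fun _ : Fin (2 * k - 1) => (k - 1) / 2)
        {c : Fin (2 * k - 1) → ℕ | ∃ i, c = arrB k i},
      x ≠ y → k - 1 ≤ NcountN x y ∧ k - 1 ≤ NcountN y x := by
  rintro x (rfl | ⟨i, rfl⟩) y (rfl | ⟨i', rfl⟩) hxy
  · exact absurd rfl hxy
  · exact ⟨(NcountN_half_arrB hodd i').ge, (NcountN_arrB_half hodd i').ge⟩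
  · exact ⟨(NcountN_arrB_half hodd i).ge, (NcountN_half_arrB hodd i).ge⟩
  · have h : i ≠ i' := by rintro rfl; exact hxy rfl
    exact ⟨(NcountN_arrB_arrB h).ge, (NcountN_arrB_arrB h.symm).ge⟩

/-- For odd `k ≥ 3`, the rows of `B` together with the all-`(k-1)/2` vector form a
`k`-ary `(k-2)`-EC-AUED code: all distinct codewords satisfy `N ≥ k-1` both ways. -/
theorem stmt12 {k : ℕ} (hk : 3 ≤ k) (hodd : Odd k) :
    ∀ x ∈ insert (fun _ : Fin (2 * k - 1) => (k - 1) / 2)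
        {c : Fin (2 * k - 1) → ℕ | ∃ i, c = arrB k i},
      ∀ y ∈ insert (fun _ : Fin (2 * k - 1) => (k - 1) / 2)
        {c : Fin (2 * k - 1) → ℕ | ∃ i, c = arrB k i},
      x ≠ y → k - 1 ≤ NcountN x y ∧ k - 1 ≤ NcountN y x :=
  stmt12_general hodd
end

section
/- Combining the packing correspondence with concatenation: a resolvable (a, k, λ)-packing with n parallel classes each of q = a/k blocks yields a q-ary (t)-EC-AUED code of size a and length 2n with t = n - λ - 1; i.e., any two distinct codewords u, v satisfy N(u,v) ≥ n - λ and N(v,u) ≥ n - λ. -/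
lemma Ncount_append_s14 {n q : ℕ} (a b a' b' : Fin n → Fin q) :
    Ncount (Fin.append a b) (Fin.append a' b') = Ncount a a' + Ncount b b' := by
  unfold Ncount
  rw [Finset.card_filter, Finset.card_filter, Finset.card_filter, Fin.sum_univ_add]
  have h2 : ∀ i : Fin n, (i.addNat n) = Fin.natAdd n i := fun i => Fin.ext (Nat.add_comm _ _)
  simp only [h2, Fin.append_left, Fin.append_right]

/-- A resolvable `(q*k, k, λ)`-packing with `n` parallel classes of `q` blocks each,
combined with the concatenation construction, yields a `q`-ary `(n-λ-1)`-EC-AUED code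
of size `q*k` and length `2n`: the concatenated rows satisfy `N ≥ n - λ` both ways. -/
theorem stmt14 {q k n lam : ℕ} (hq : 1 ≤ q) (hk : 1 ≤ k)
    (P : Fin n → Fin (q * k) → Fin q)
    (hblocks : ∀ c : Fin n, ∀ i : Fin q,
      (Finset.univ.filter fun x => P c x = i).card = k)
    (hpack : ∀ x y : Fin (q * k), x ≠ y →
      (Finset.univ.filter fun c : Fin n => P c x = P c y).card ≤ lam) :
    ∀ x y : Fin (q * k), x ≠ y →
      n - lam ≤ Ncount (Fin.append (fun c => P c x) (fun c => (P c x).rev))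
                       (Fin.append (fun c => P c y) (fun c => (P c y).rev)) ∧
      n - lam ≤ Ncount (Fin.append (fun c => P c y) (fun c => (P c y).rev))
                       (Fin.append (fun c => P c x) (fun c => (P c x).rev)) := by
  have key : ∀ u v : Fin (q * k), u ≠ v →
      n - lam ≤ Ncount (Fin.append (fun c => P c u) (fun c => (P c u).rev))
                       (Fin.append (fun c => P c v) (fun c => (P c v).rev)) := by
    intro u v huv
    rw [Ncount_append_s14]
    unfold Ncount
    have hB : (Finset.univ.filter fun c : Fin n => (P c v).rev < (P c u).rev).card
        = (Finset.univ.filter fun c : Fin n => P c u < P c v).card := by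
      congr 1
      apply Finset.filter_congr
      intro c _
      simp [Fin.rev_lt_rev]
    rw [hB]
    have hdisj : Disjoint (Finset.univ.filter fun c : Fin n => P c v < P c u)
        (Finset.univ.filter fun c : Fin n => P c u < P c v) := by
      rw [Finset.disjoint_filter]
      intro c _ h1 h2
      exact absurd h2 (not_lt.mpr h1.le)
    have hunion : (Finset.univ.filter fun c : Fin n => P c v < P c u).card
        + (Finset.univ.filter fun c : Fin n => P c u < P c v).card
        = (Finset.univ.filter fun c : Fin n => ¬ (P c u = P c v)).card := by
      rw [← Finset.card_union_of_disjoint hdisj, ← Finset.filter_or]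
      congr 1
      apply Finset.filter_congr
      intro c _
      constructor
      · rintro (h | h) <;> simp [h.ne, h.ne']
      · intro h
        rcases lt_or_gt_of_ne (by simpa using h) with h' | h'
        · exact Or.inr h'
        · exact Or.inl h'
    rw [hunion]
    have htot : (Finset.univ.filter fun c : Fin n => P c u = P c v).card
        + (Finset.univ.filter fun c : Fin n => ¬ (P c u = P c v)).card
        = n := by
      rw [Finset.card_filter_add_card_filter_not]
      simp
    have := hpack u v huv
    omega
  intro x y hxy
  exact ⟨key x y hxy, key y x hxy.symm⟩
end
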